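/- Let G be a graph and G' the graph obtained from G by subdividing every edge three times (edge e = uv becomes the path u, x_u^e, y^e, x_v^e, v). If c' is a majority additive k-coloring of G', then the restriction of c' to V(G) is a proper vertex k-coloring of G. -/

import Mathlib

open SimpleGraph Finset

variable {V : Type*} [Fintype V] [DecidableEq V]

/-- The induced sum function `s_c(v) = ∑_{w ∈ N_G(v)} c(w)`. -/
def sc {W : Type*} [Fintype W] (G : SimpleGraph W) [DecidableRel G.Adj] (c : W → ℕ) (v : W) : ℕ :=
  ∑ w ∈ G.neighborFinset v, c w

/-- `c` is a majority additive `k`-coloring of `G`. -/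
def IsMAC {W : Type*} [Fintype W] (G : SimpleGraph W) [DecidableRel G.Adj] (k : ℕ) (c : W → ℕ) :
    Prop :=
  (∀ v, c v ∈ Finset.Icc 1 k) ∧
  ∀ u : W, 2 ≤ G.degree u → ∀ s : ℕ,
    2 * ((G.neighborFinset u).filter (fun v => sc G c v = s)).card ≤ G.degree u

/-- Vertex type of the threefold subdivision of `G`:
original vertices, subdivision vertices `x_u^e` (encoded as ordered adjacent pairs `(u,v)`
standing for the neighbor of `u` on the subdivided edge `e = uv`), and middle vertices `y^e`
(one for each edge `e`). -/
def SubVert (G : SimpleGraph V) : Type _ :=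
  V ⊕ ({p : V × V // G.Adj p.1 p.2} ⊕ G.edgeSet)

instance (G : SimpleGraph V) [DecidableRel G.Adj] : Fintype (SubVert G) := by
  unfold SubVert; infer_instance

instance (G : SimpleGraph V) [DecidableRel G.Adj] : DecidableEq (SubVert G) := by
  unfold SubVert; infer_instance

/-- One-sided adjacency relation of the threefold subdivision:
`u ~ x_u^e` and `x_u^e ~ y^e`. -/
def subAdjFun (G : SimpleGraph V) [DecidableRel G.Adj] : SubVert G → SubVert G → Bool :=
  fun a b =>
    match a, b with
    | Sum.inl u, Sum.inr (Sum.inl p) => decide (u = p.val.1)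
    | Sum.inr (Sum.inl p), Sum.inr (Sum.inr e) => decide (e.val = Sym2.mk p.val.1 p.val.2)
    | _, _ => false

/-- The threefold subdivision of `G`: every edge `e = uv` is replaced by the path
`u, x_u^e, y^e, x_v^e, v`. -/
def subdiv3 (G : SimpleGraph V) [DecidableRel G.Adj] : SimpleGraph (SubVert G) :=
  SimpleGraph.fromRel (fun a b => subAdjFun G a b = true)

instance (G : SimpleGraph V) [DecidableRel G.Adj] : DecidableRel (subdiv3 G).Adj :=
  fun a b => decidable_of_iff _ (SimpleGraph.fromRel_adj _ a b).symm

lemma nbhd_y (G : SimpleGraph V) [DecidableRel G.Adj] {u v : V} (huv : G.Adj u v) :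
    (subdiv3 G).neighborFinset (@id (SubVert G) (Sum.inr (Sum.inr ⟨s(u,v), huv⟩))) =
      {@id (SubVert G) (Sum.inr (Sum.inl ⟨(u,v), huv⟩)),
        @id (SubVert G) (Sum.inr (Sum.inl ⟨(v,u), huv.symm⟩))} := by
  ext a
  rw [mem_neighborFinset]
  show (subdiv3 G).Adj _ a ↔ _
  rw [subdiv3, SimpleGraph.fromRel_adj, Finset.mem_insert, Finset.mem_singleton]
  dsimp only [id]
  rcases a with w | p | e
  · constructor
    · rintro ⟨-, h | h⟩ <;> simp [subAdjFun] at h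
    · rintro (h | h) <;> injection h
  · constructor
    · rintro ⟨-, h | h⟩
      · simp [subAdjFun] at h
      · have hs : (s(u,v) : Sym2 V) = s(p.val.1, p.val.2) := of_decide_eq_true h
        rcases Sym2.eq_iff.mp hs with ⟨h1, h2⟩ | ⟨h1, h2⟩
        · exact Or.inl (congrArg (fun t => (Sum.inr (Sum.inl t) : SubVert G))
            (Subtype.ext (Prod.ext h1 h2))).symm
        · exact Or.inr (congrArg (fun t => (Sum.inr (Sum.inl t) : SubVert G))
            (Subtype.ext (Prod.ext h2 h1))).symm
    · rintro (h | h)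
      · injection h with h; injection h with h
        subst h
        refine ⟨fun hc => ?_, Or.inr (decide_eq_true rfl)⟩
        injection hc with hc; injection hc
      · injection h with h; injection h with h
        subst h
        refine ⟨fun hc => ?_, Or.inr (decide_eq_true (Sym2.eq_swap))⟩
        injection hc with hc; injection hc
  · constructor
    · rintro ⟨-, h | h⟩ <;> simp [subAdjFun] at h
    · rintro (h | h) <;> (injection h with h; injection h)

lemma nbhd_x (G : SimpleGraph V) [DecidableRel G.Adj] {u v : V} (huv : G.Adj u v) :
    (subdiv3 G).neighborFinset (@id (SubVert G) (Sum.inr (Sum.inl ⟨(u,v), huv⟩))) =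
      {@id (SubVert G) (Sum.inl u), @id (SubVert G) (Sum.inr (Sum.inr ⟨s(u,v), huv⟩))} := by
  ext a
  rw [mem_neighborFinset]
  show (subdiv3 G).Adj _ a ↔ _
  rw [subdiv3, SimpleGraph.fromRel_adj, Finset.mem_insert, Finset.mem_singleton]
  dsimp only [id]
  rcases a with w | p | e
  · constructor
    · rintro ⟨-, h | h⟩
      · simp [subAdjFun] at h
      · have hw : w = u := of_decide_eq_true h
        exact Or.inl (congrArg Sum.inl hw)
    · rintro (h | h)
      · injection h with h
        subst h
        refine ⟨fun hc => ?_, Or.inr (decide_eq_true rfl)⟩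
        injection hc
      · injection h
  · constructor
    · rintro ⟨-, h | h⟩ <;> simp [subAdjFun] at h
    · rintro (h | h)
      · injection h
      · injection h with h; injection h
  · constructor
    · rintro ⟨-, h | h⟩
      · exact Or.inr (congrArg (fun t => (Sum.inr (Sum.inr t) : SubVert G))
          (Subtype.ext (of_decide_eq_true h)))
      · simp [subAdjFun] at h
    · rintro (h | h)
      · injection h
      · injection h with h; injection h with h
        subst h
        refine ⟨fun hc => ?_, Or.inl (decide_eq_true rfl)⟩
        injection hc with hc; injection hc

theorem stmt18 (G : SimpleGraph V) [DecidableRel G.Adj] (k : ℕ)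
    (c' : SubVert G → ℕ) (h : IsMAC (subdiv3 G) k c') :
    ∀ u v : V, G.Adj u v → c' (Sum.inl u) ≠ c' (Sum.inl v) := by
  intro u v huv hc
  have hne : u ≠ v := huv.ne
  set E : G.edgeSet := ⟨s(u,v), huv⟩ with hE
  have hPne : @id (SubVert G) (Sum.inr (Sum.inl ⟨(u,v), huv⟩)) ≠
      @id (SubVert G) (Sum.inr (Sum.inl ⟨(v,u), huv.symm⟩)) := by
    intro hc'
    injection hc' with h1; injection h1 with h1
    exact hne (congrArg Prod.fst (congrArg Subtype.val h1))
  have hdeg : (subdiv3 G).degree (@id (SubVert G) (Sum.inr (Sum.inr E))) = 2 := by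
    rw [SimpleGraph.degree, nbhd_y G huv, Finset.card_insert_of_notMem (fun hm => hPne (Finset.mem_singleton.mp hm)),
      Finset.card_singleton]
  have hxu : sc (subdiv3 G) c' (@id (SubVert G) (Sum.inr (Sum.inl ⟨(u,v), huv⟩))) =
      c' (Sum.inl u) + c' (Sum.inr (Sum.inr E)) := by
    rw [sc, nbhd_x G huv, Finset.sum_pair (fun hc' => by injection hc')]
    rfl
  have hEswap : (⟨s(v,u), huv.symm⟩ : G.edgeSet) = E := Subtype.ext Sym2.eq_swap
  have hxv : sc (subdiv3 G) c' (@id (SubVert G) (Sum.inr (Sum.inl ⟨(v,u), huv.symm⟩))) =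
      c' (Sum.inl v) + c' (Sum.inr (Sum.inr E)) := by
    rw [sc, nbhd_x G huv.symm, Finset.sum_pair (fun hc' => by injection hc'), hEswap]
    rfl
  have key := h.2 (@id (SubVert G) (Sum.inr (Sum.inr E))) (by rw [hdeg]) (c' (Sum.inl u) + c' (Sum.inr (Sum.inr E)))
  rw [hdeg, nbhd_y G huv] at key
  rw [Finset.filter_true_of_mem ?_] at key
  · rw [Finset.card_insert_of_notMem (fun hm => hPne (Finset.mem_singleton.mp hm)), Finset.card_singleton] at key
    omega
  · intro x hx
    rcases Finset.mem_insert.mp hx with rfl | hx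
    · exact hxu
    · rw [Finset.mem_singleton.mp hx, hxv, hc]
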